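/- arXiv:2409.12007 — 5 statements merged into one kernel-verified Lean document; each statement's English description precedes it below -/
import Mathlib

section
/- For any β₁, β₂ > 0 with β₁ + β₂ = 1, the Minkowski sum of two origin-centered ellipsoids satisfies E(0, M₁) ⊕ E(0, M₂) ⊆ E(0, M₁/β₁ + M₂/β₂). -/
open Matrix Real Pointwise

lemma pd_unit_det {n : ℕ} {M : Matrix (Fin n) (Fin n) ℝ} (hM : M.PosDef) :
    IsUnit M.det := isUnit_iff_ne_zero.mpr hM.det_pos.ne'

lemma pd_smul {n : ℕ} {M : Matrix (Fin n) (Fin n) ℝ} (hM : M.PosDef) {c : ℝ}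
    (hc : 0 < c) : (c • M).PosDef := by
  refine ⟨?_, fun x hx => ?_⟩
  · rw [Matrix.IsHermitian, conjTranspose_smul, star_trivial, hM.1]
  · exact (hM.smul hc).2 hx

lemma symm_dot {n : ℕ} (M : Matrix (Fin n) (Fin n) ℝ) (hM : Mᵀ = M)
    (a b : Fin n → ℝ) : a ⬝ᵥ M *ᵥ b = b ⬝ᵥ M *ᵥ a := by
  rw [dotProduct_mulVec, ← mulVec_transpose, hM, dotProduct_comm]

lemma quad_nonneg {n : ℕ} {M : Matrix (Fin n) (Fin n) ℝ} (hM : M.PosSemidef)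
    (d : Fin n → ℝ) : 0 ≤ d ⬝ᵥ M *ᵥ d := by
  simpa using hM.dotProduct_mulVec_nonneg d

lemma key_ineq {n : ℕ} (A B : Matrix (Fin n) (Fin n) ℝ) (hA : A.PosDef)
    (hB : B.PosDef) (x y : Fin n → ℝ) :
    (x + y) ⬝ᵥ (A + B)⁻¹ *ᵥ (x + y) ≤ x ⬝ᵥ A⁻¹ *ᵥ x + y ⬝ᵥ B⁻¹ *ᵥ y := by
  have hAB : (A + B).PosDef := hA.add hB
  set w : Fin n → ℝ := (A + B)⁻¹ *ᵥ (x + y) with hw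
  set u : Fin n → ℝ := A *ᵥ w with hu
  set v : Fin n → ℝ := B *ᵥ w with hv
  have hAu : A⁻¹ *ᵥ u = w := by
    rw [hu, mulVec_mulVec, Matrix.nonsing_inv_mul A (pd_unit_det hA), one_mulVec]
  have hBv : B⁻¹ *ᵥ v = w := by
    rw [hv, mulVec_mulVec, Matrix.nonsing_inv_mul B (pd_unit_det hB), one_mulVec]
  have huv : u + v = x + y := by
    rw [hu, hv, ← add_mulVec, hw, mulVec_mulVec,
      Matrix.mul_nonsing_inv _ (pd_unit_det hAB), one_mulVec]
  set d : Fin n → ℝ := x - u with hd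
  have hx : x = u + d := by rw [hd]; ring
  have hy : y = v - d := by
    have : y = (x + y) - x := by ring
    rw [this, ← huv, hx]; ring
  have hAsym : A⁻¹ᵀ = A⁻¹ := by
    have := hA.inv.isHermitian
    simpa [Matrix.IsHermitian, conjTranspose_eq_transpose_of_trivial] using this
  have hBsym : B⁻¹ᵀ = B⁻¹ := by
    have := hB.inv.isHermitian
    simpa [Matrix.IsHermitian, conjTranspose_eq_transpose_of_trivial] using this
  have e1 : x ⬝ᵥ A⁻¹ *ᵥ x = u ⬝ᵥ w + 2 * (d ⬝ᵥ w) + d ⬝ᵥ A⁻¹ *ᵥ d := by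
    rw [hx]
    have hsw : u ⬝ᵥ A⁻¹ *ᵥ d = d ⬝ᵥ w := by
      rw [symm_dot A⁻¹ hAsym, hAu]
    simp only [mulVec_add, dotProduct_add, add_dotProduct, hAu, hsw]
    ring
  have e2 : y ⬝ᵥ B⁻¹ *ᵥ y = v ⬝ᵥ w - 2 * (d ⬝ᵥ w) + d ⬝ᵥ B⁻¹ *ᵥ d := by
    rw [hy]
    have hsw : v ⬝ᵥ B⁻¹ *ᵥ d = d ⬝ᵥ w := by
      rw [symm_dot B⁻¹ hBsym, hBv]
    simp only [mulVec_sub, dotProduct_sub, sub_dotProduct, hBv, hsw]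
    ring
  have e3 : (x + y) ⬝ᵥ w = u ⬝ᵥ w + v ⬝ᵥ w := by
    rw [← huv, add_dotProduct]
  have h1 : 0 ≤ d ⬝ᵥ A⁻¹ *ᵥ d := quad_nonneg hA.inv.posSemidef d
  have h2 : 0 ≤ d ⬝ᵥ B⁻¹ *ᵥ d := quad_nonneg hB.inv.posSemidef d
  calc (x + y) ⬝ᵥ (A + B)⁻¹ *ᵥ (x + y) = (x + y) ⬝ᵥ w := by rw [hw]
    _ ≤ x ⬝ᵥ A⁻¹ *ᵥ x + y ⬝ᵥ B⁻¹ *ᵥ y := by rw [e1, e2, e3]; linarith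

/-- For β₁, β₂ > 0 with β₁ + β₂ = 1, the Minkowski sum of two origin-centered
ellipsoids is contained in the ellipsoid E(0, M₁/β₁ + M₂/β₂). -/
theorem minkowski_sum_over_approximation {n : ℕ}
    (M₁ M₂ : Matrix (Fin n) (Fin n) ℝ) (h₁ : M₁.PosDef) (h₂ : M₂.PosDef)
    (β₁ β₂ : ℝ) (hβ₁ : 0 < β₁) (hβ₂ : 0 < β₂) (hsum : β₁ + β₂ = 1) :
    {τ : Fin n → ℝ | τ ⬝ᵥ M₁⁻¹ *ᵥ τ ≤ 1} + {τ : Fin n → ℝ | τ ⬝ᵥ M₂⁻¹ *ᵥ τ ≤ 1} ⊆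
      {τ : Fin n → ℝ | τ ⬝ᵥ (β₁⁻¹ • M₁ + β₂⁻¹ • M₂)⁻¹ *ᵥ τ ≤ 1} := by
  rintro τ ⟨x, hx, y, hy, rfl⟩
  simp only [Set.mem_setOf_eq] at hx hy ⊢
  have hA : (β₁⁻¹ • M₁).PosDef := pd_smul h₁ (by positivity)
  have hB : (β₂⁻¹ • M₂).PosDef := pd_smul h₂ (by positivity)
  have hkey := key_ineq _ _ hA hB x y
  have eA : (β₁⁻¹ • M₁)⁻¹ = β₁ • M₁⁻¹ := by
    have : Invertible β₁⁻¹ := invertibleOfNonzero (by positivity)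
    rw [Matrix.inv_smul (A := M₁) (k := β₁⁻¹) (pd_unit_det h₁)]
    congr 1
    simp [invOf_eq_inv]
  have eB : (β₂⁻¹ • M₂)⁻¹ = β₂ • M₂⁻¹ := by
    have : Invertible β₂⁻¹ := invertibleOfNonzero (by positivity)
    rw [Matrix.inv_smul (A := M₂) (k := β₂⁻¹) (pd_unit_det h₂)]
    congr 1
    simp [invOf_eq_inv]
  rw [eA, eB, smul_mulVec, smul_mulVec, dotProduct_smul,
    dotProduct_smul, smul_eq_mul, smul_eq_mul] at hkey
  nlinarith [hkey, mul_le_of_le_one_right hβ₁.le hx, mul_le_of_le_one_right hβ₂.le hy]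
end

section
/- For any nonzero direction η ∈ ℝⁿ, there exist β₁*, β₂* > 0 with β₁* + β₂* = 1 such that the supporting function of E(0, M₁/β₁* + M₂/β₂*) in direction η equals the supporting function of E(0,M₁) ⊕ E(0,M₂) in direction η, i.e., √(ηᵀ(M₁/β₁* + M₂/β₂*)η) = √(ηᵀ M₁ η) + √(ηᵀ M₂ η). -/
open Matrix Real

/-- For any nonzero direction η there exist β₁*, β₂* > 0 with β₁* + β₂* = 1 such that
the over-approximation is tight in direction η:
√(ηᵀ(M₁/β₁* + M₂/β₂*)η) = √(ηᵀM₁η) + √(ηᵀM₂η). -/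
theorem over_approximation_tight {n : ℕ}
    (M₁ M₂ : Matrix (Fin n) (Fin n) ℝ) (h₁ : M₁.PosDef) (h₂ : M₂.PosDef)
    (η : Fin n → ℝ) (hη : η ≠ 0) :
    ∃ β₁ β₂ : ℝ, 0 < β₁ ∧ 0 < β₂ ∧ β₁ + β₂ = 1 ∧
      Real.sqrt (η ⬝ᵥ (β₁⁻¹ • M₁ + β₂⁻¹ • M₂) *ᵥ η) =
        Real.sqrt (η ⬝ᵥ M₁ *ᵥ η) + Real.sqrt (η ⬝ᵥ M₂ *ᵥ η) := by
  have hq₁ : 0 < η ⬝ᵥ M₁ *ᵥ η := by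
    have := h₁.dotProduct_mulVec_pos hη; simpa using this
  have hq₂ : 0 < η ⬝ᵥ M₂ *ᵥ η := by
    have := h₂.dotProduct_mulVec_pos hη; simpa using this
  set a := Real.sqrt (η ⬝ᵥ M₁ *ᵥ η) with ha
  set b := Real.sqrt (η ⬝ᵥ M₂ *ᵥ η) with hb
  have hapos : 0 < a := Real.sqrt_pos.mpr hq₁
  have hbpos : 0 < b := Real.sqrt_pos.mpr hq₂
  have habpos : 0 < a + b := by linarith
  refine ⟨a / (a + b), b / (a + b), div_pos hapos habpos, div_pos hbpos habpos, ?_, ?_⟩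
  · field_simp
  · have ha2 : a ^ 2 = η ⬝ᵥ M₁ *ᵥ η := Real.sq_sqrt hq₁.le
    have hb2 : b ^ 2 = η ⬝ᵥ M₂ *ᵥ η := Real.sq_sqrt hq₂.le
    have key : η ⬝ᵥ ((a / (a + b))⁻¹ • M₁ + (b / (a + b))⁻¹ • M₂) *ᵥ η = (a + b) ^ 2 := by
      rw [Matrix.add_mulVec, dotProduct_add, Matrix.smul_mulVec,
        Matrix.smul_mulVec, dotProduct_smul, dotProduct_smul,
        ← ha2, ← hb2]
      simp only [smul_eq_mul]
      field_simp
    rw [key, Real.sqrt_sq habpos.le]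
end

section
/- The interiors of two ellipsoids E(t₁,M₁) and E(t₂,M₂) are disjoint if and only if there exist β₁*, β₂* > 0 with β₁* + β₂* = 1 such that t₁ − t₂ does not lie in the interior of the ellipsoid E(0, M₁/β₁* + M₂/β₂*). -/
open Matrix Real

variable {n : ℕ}

lemma symm_of_posdef {A : Matrix (Fin n) (Fin n) ℝ} (hA : A.PosDef) : Aᵀ = A := hA.isHermitian

lemma dot_pos {A : Matrix (Fin n) (Fin n) ℝ} (hA : A.PosDef) {x : Fin n → ℝ} (hx : x ≠ 0) :
    0 < x ⬝ᵥ A *ᵥ x := by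
  have := hA.dotProduct_mulVec_pos hx
  simpa using this

lemma dot_nonneg {A : Matrix (Fin n) (Fin n) ℝ} (hA : A.PosDef) (x : Fin n → ℝ) :
    0 ≤ x ⬝ᵥ A *ᵥ x := by
  have := hA.posSemidef.dotProduct_mulVec_nonneg x
  simpa using this

lemma dot_symm {A : Matrix (Fin n) (Fin n) ℝ} (hA : Aᵀ = A) (x y : Fin n → ℝ) :
    x ⬝ᵥ A *ᵥ y = y ⬝ᵥ A *ᵥ x := by
  rw [dotProduct_mulVec, ← mulVec_transpose, hA, dotProduct_comm]

lemma posdef_comb {M₁ M₂ : Matrix (Fin n) (Fin n) ℝ} (h₁ : M₁.PosDef) (h₂ : M₂.PosDef)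
    {β₁ β₂ : ℝ} (hb₁ : 0 < β₁) (hb₂ : 0 < β₂) : (β₁⁻¹ • M₁ + β₂⁻¹ • M₂).PosDef := by
  apply Matrix.PosDef.of_dotProduct_mulVec_pos
  · show (β₁⁻¹ • M₁ + β₂⁻¹ • M₂)ᴴ = _
    have e1 : M₁ᴴ = M₁ := h₁.isHermitian
    have e2 : M₂ᴴ = M₂ := h₂.isHermitian
    simp [conjTranspose_add, conjTranspose_smul, symm_of_posdef h₁, symm_of_posdef h₂]
  · intro x hx
    have p1 := dot_pos h₁ hx
    have p2 := dot_pos h₂ hx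
    have : x ⬝ᵥ (β₁⁻¹ • M₁ + β₂⁻¹ • M₂) *ᵥ x
        = β₁⁻¹ * (x ⬝ᵥ M₁ *ᵥ x) + β₂⁻¹ * (x ⬝ᵥ M₂ *ᵥ x) := by
      rw [add_mulVec, dotProduct_add, smul_mulVec, smul_mulVec,
        dotProduct_smul, dotProduct_smul, smul_eq_mul, smul_eq_mul]
    show 0 < star x ⬝ᵥ _
    simp only [star_trivial]
    rw [this]
    positivity

lemma mulVec_inv_cancel {N : Matrix (Fin n) (Fin n) ℝ} (hN : N.PosDef) (t : Fin n → ℝ) :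
    N *ᵥ (N⁻¹ *ᵥ t) = t := by
  rw [mulVec_mulVec, Matrix.mul_nonsing_inv _ hN.det_pos.ne'.isUnit, one_mulVec]

lemma quad_expand (N : Matrix (Fin n) (Fin n) ℝ) (x y : Fin n → ℝ) :
    (x - y) ⬝ᵥ N *ᵥ (x - y)
      = x ⬝ᵥ N *ᵥ x - x ⬝ᵥ N *ᵥ y - y ⬝ᵥ N *ᵥ x + y ⬝ᵥ N *ᵥ y := by
  rw [mulVec_sub, sub_dotProduct, dotProduct_sub, dotProduct_sub]
  ring

-- L4
lemma lower_bound_inv_quad {N : Matrix (Fin n) (Fin n) ℝ} (hN : N.PosDef)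
    (t w : Fin n → ℝ) :
    2 * (t ⬝ᵥ w) - w ⬝ᵥ N *ᵥ w ≤ t ⬝ᵥ N⁻¹ *ᵥ t := by
  set d := N⁻¹ *ᵥ t with hd
  have hNd : N *ᵥ d = t := mulVec_inv_cancel hN t
  have h0 : 0 ≤ (d - w) ⬝ᵥ N *ᵥ (d - w) := dot_nonneg hN _
  rw [quad_expand] at h0
  have e1 : d ⬝ᵥ N *ᵥ d = t ⬝ᵥ N⁻¹ *ᵥ t := by
    rw [dot_symm (symm_of_posdef hN), hNd, dotProduct_comm]
  have e2 : d ⬝ᵥ N *ᵥ w = t ⬝ᵥ w := by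
    rw [dot_symm (symm_of_posdef hN), hNd, dotProduct_comm]
  have e3 : w ⬝ᵥ N *ᵥ d = t ⬝ᵥ w := by rw [hNd, dotProduct_comm]
  rw [e1, e2, e3] at h0
  linarith

-- L5'
lemma amgm_quad {B : Matrix (Fin n) (Fin n) ℝ} (hB : B.PosDef) {l : ℝ} (hl : 0 < l)
    (y q : Fin n → ℝ) :
    2 * (y ⬝ᵥ q) ≤ l * (y ⬝ᵥ B⁻¹ *ᵥ y) + l⁻¹ * (q ⬝ᵥ B *ᵥ q) := by
  have hBp : B *ᵥ (B⁻¹ *ᵥ y) = y := mulVec_inv_cancel hB y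
  have h0 : 0 ≤ (l • (B⁻¹ *ᵥ y) - q) ⬝ᵥ B *ᵥ (l • (B⁻¹ *ᵥ y) - q) := dot_nonneg hB _
  rw [quad_expand] at h0
  have epp : (B⁻¹ *ᵥ y) ⬝ᵥ B *ᵥ (B⁻¹ *ᵥ y) = y ⬝ᵥ B⁻¹ *ᵥ y := by
    rw [dot_symm (symm_of_posdef hB), hBp, dotProduct_comm]
  have epq : (B⁻¹ *ᵥ y) ⬝ᵥ B *ᵥ q = y ⬝ᵥ q := by
    rw [dot_symm (symm_of_posdef hB), hBp, dotProduct_comm]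
  have eqp : q ⬝ᵥ B *ᵥ (B⁻¹ *ᵥ y) = y ⬝ᵥ q := by rw [hBp, dotProduct_comm]
  have h1 : 0 ≤ l^2 * (y ⬝ᵥ B⁻¹ *ᵥ y) - 2 * l * (y ⬝ᵥ q) + q ⬝ᵥ B *ᵥ q := by
    have e4 : (l • (B⁻¹ *ᵥ y)) ⬝ᵥ B *ᵥ (l • (B⁻¹ *ᵥ y)) = l^2 * ((B⁻¹ *ᵥ y) ⬝ᵥ B *ᵥ (B⁻¹ *ᵥ y)) := by
      rw [smul_dotProduct, mulVec_smul, dotProduct_smul, smul_eq_mul, smul_eq_mul]; ring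
    have e5 : (l • (B⁻¹ *ᵥ y)) ⬝ᵥ B *ᵥ q = l * ((B⁻¹ *ᵥ y) ⬝ᵥ B *ᵥ q) := by
      rw [smul_dotProduct, smul_eq_mul]
    have e6 : q ⬝ᵥ B *ᵥ (l • (B⁻¹ *ᵥ y)) = l * (q ⬝ᵥ B *ᵥ (B⁻¹ *ᵥ y)) := by
      rw [mulVec_smul, dotProduct_smul, smul_eq_mul]
    rw [e4, e5, e6, epp, epq, eqp] at h0
    linarith
  have hinv : l * l⁻¹ = 1 := mul_inv_cancel₀ hl.ne'
  rw [← mul_le_mul_iff_right₀ hl]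
  have e7 : l * (l * (y ⬝ᵥ B⁻¹ *ᵥ y) + l⁻¹ * (q ⬝ᵥ B *ᵥ q))
      = l ^ 2 * (y ⬝ᵥ B⁻¹ *ᵥ y) + l * l⁻¹ * (q ⬝ᵥ B *ᵥ q) := by ring
  rw [e7, hinv, one_mul]
  linarith

lemma continuousOn_phi (M₁ M₂ : Matrix (Fin n) (Fin n) ℝ) (h₁ : M₁.PosDef) (h₂ : M₂.PosDef)
    (t : Fin n → ℝ) :
    ContinuousOn (fun β : ℝ => t ⬝ᵥ (β⁻¹ • M₁ + (1 - β)⁻¹ • M₂)⁻¹ *ᵥ t) (Set.Ioo 0 1) := by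
  have hrw : (fun β : ℝ => t ⬝ᵥ (β⁻¹ • M₁ + (1 - β)⁻¹ • M₂)⁻¹ *ᵥ t)
      = fun β : ℝ => t ⬝ᵥ ((det (β⁻¹ • M₁ + (1 - β)⁻¹ • M₂))⁻¹
          • adjugate (β⁻¹ • M₁ + (1 - β)⁻¹ • M₂)) *ᵥ t := by
    funext β
    rw [Matrix.inv_def, Ring.inverse_eq_inv']
  rw [hrw]
  intro β hβ
  apply ContinuousAt.continuousWithinAt
  have hβ0 : β ≠ 0 := ne_of_gt hβ.1
  have hβ1 : (1 : ℝ) - β ≠ 0 := by have := hβ.2; intro h; linarith [sub_eq_zero.mp h]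
  have hN : ContinuousAt (fun β : ℝ => β⁻¹ • M₁ + (1 - β)⁻¹ • M₂) β := by
    exact ((continuousAt_inv₀ hβ0).smul continuousAt_const).add
      (((continuousAt_const.sub continuousAt_id).inv₀ hβ1).smul continuousAt_const)
  have hdet : ContinuousAt (fun β : ℝ => det (β⁻¹ • M₁ + (1 - β)⁻¹ • M₂)) β :=
    (continuous_id.matrix_det).continuousAt.comp hN
  have hdet0 : det (β⁻¹ • M₁ + (1 - β)⁻¹ • M₂) ≠ 0 := by
    have hpd := posdef_comb h₁ h₂ hβ.1 (by linarith [hβ.2] : (0:ℝ) < 1 - β)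
    exact hpd.det_pos.ne'
  have hadj : ContinuousAt (fun β : ℝ => adjugate (β⁻¹ • M₁ + (1 - β)⁻¹ • M₂)) β :=
    (continuous_id.matrix_adjugate).continuousAt.comp hN
  have hInv : ContinuousAt (fun β : ℝ => (det (β⁻¹ • M₁ + (1 - β)⁻¹ • M₂))⁻¹
      • adjugate (β⁻¹ • M₁ + (1 - β)⁻¹ • M₂)) β := (hdet.inv₀ hdet0).smul hadj
  have hF : Continuous (fun A : Matrix (Fin n) (Fin n) ℝ => t ⬝ᵥ A *ᵥ t) :=
    continuous_const.dotProduct (continuous_id.matrix_mulVec continuous_const)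
  exact hF.continuousAt.comp hInv

lemma interior_ellipsoid {n : ℕ} (A : Matrix (Fin n) (Fin n) ℝ) (t : Fin n → ℝ) :
    interior {τ : Fin n → ℝ | (τ - t) ⬝ᵥ A *ᵥ (τ - t) ≤ 1}
      = {τ : Fin n → ℝ | (τ - t) ⬝ᵥ A *ᵥ (τ - t) < 1} := by
  have hcont : Continuous fun τ : Fin n → ℝ => (τ - t) ⬝ᵥ A *ᵥ (τ - t) := by
    have h : Continuous fun τ : Fin n → ℝ => τ - t := continuous_id.sub continuous_const
    exact h.dotProduct
      ((continuous_const : Continuous fun _ : Fin n → ℝ => A).matrix_mulVec h)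
  apply Set.eq_of_subset_of_subset
  · intro τ hτ
    have hle : τ ∈ {τ : Fin n → ℝ | (τ - t) ⬝ᵥ A *ᵥ (τ - t) ≤ 1} := interior_subset hτ
    rw [Set.mem_setOf_eq] at hle
    rcases lt_or_eq_of_le hle with h | h
    · exact h
    · exfalso
      have hf : Continuous fun s : ℝ => τ + s • (τ - t) :=
        continuous_const.add (continuous_id.smul continuous_const)
      have hnh : {τ' : Fin n → ℝ | (τ' - t) ⬝ᵥ A *ᵥ (τ' - t) ≤ 1} ∈ nhds τ :=
        mem_interior_iff_mem_nhds.mp hτ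
      have hev : ∀ᶠ s : ℝ in nhds 0, τ + s • (τ - t) ∈
          {τ' : Fin n → ℝ | (τ' - t) ⬝ᵥ A *ᵥ (τ' - t) ≤ 1} := by
        have h0 := hf.tendsto 0
        simp only [zero_smul, add_zero] at h0
        exact h0.eventually_mem hnh
      have hev' : ∀ᶠ s : ℝ in nhdsWithin 0 (Set.Ioi 0), τ + s • (τ - t) ∈
          {τ' : Fin n → ℝ | (τ' - t) ⬝ᵥ A *ᵥ (τ' - t) ≤ 1} :=
        hev.filter_mono nhdsWithin_le_nhds
      obtain ⟨s, hs, hspos⟩ := (hev'.and (eventually_mem_nhdsWithin)).exists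
      have hrw : τ + s • (τ - t) - t = (1 + s) • (τ - t) := by
        rw [add_smul, one_smul]; abel
      rw [Set.mem_setOf_eq, hrw] at hs
      have hq : ((1 + s) • (τ - t)) ⬝ᵥ A *ᵥ ((1 + s) • (τ - t))
          = (1 + s) ^ 2 * ((τ - t) ⬝ᵥ A *ᵥ (τ - t)) := by
        simp only [smul_dotProduct, mulVec_smul, dotProduct_smul, smul_eq_mul]; ring
      rw [hq, ← h] at hs
      have hs0 : (0:ℝ) < s := hspos
      nlinarith
  · exact interior_maximal (Set.setOf_subset_setOf.mpr fun τ h => le_of_lt h)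
      (isOpen_lt hcont continuous_const)

lemma comb_apply (M₁ M₂ : Matrix (Fin n) (Fin n) ℝ) (c₁ c₂ : ℝ) (x y : Fin n → ℝ) :
    x ⬝ᵥ (c₁ • M₁ + c₂ • M₂) *ᵥ y = c₁ * (x ⬝ᵥ M₁ *ᵥ y) + c₂ * (x ⬝ᵥ M₂ *ᵥ y) := by
  rw [add_mulVec, dotProduct_add, smul_mulVec, smul_mulVec,
    dotProduct_smul, dotProduct_smul, smul_eq_mul, smul_eq_mul]

lemma phi_eq {N : Matrix (Fin n) (Fin n) ℝ} (hN : N.PosDef) (t : Fin n → ℝ) :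
    t ⬝ᵥ N⁻¹ *ᵥ t = (N⁻¹ *ᵥ t) ⬝ᵥ N *ᵥ (N⁻¹ *ᵥ t) := by
  rw [mulVec_inv_cancel hN, dotProduct_comm]

lemma interior_ellipsoid0 (A : Matrix (Fin n) (Fin n) ℝ) :
    interior {τ : Fin n → ℝ | τ ⬝ᵥ A *ᵥ τ ≤ 1} = {τ : Fin n → ℝ | τ ⬝ᵥ A *ᵥ τ < 1} := by
  have h := interior_ellipsoid A 0
  simpa using h

-- bound: φ β ≤ β * c₁ and φ β ≤ (1-β) * c₂
lemma phi_le {M₁ M₂ : Matrix (Fin n) (Fin n) ℝ} (h₁ : M₁.PosDef) (h₂ : M₂.PosDef)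
    (t : Fin n → ℝ) {β : ℝ} (hβ : β ∈ Set.Ioo (0:ℝ) 1) :
    t ⬝ᵥ (β⁻¹ • M₁ + (1 - β)⁻¹ • M₂)⁻¹ *ᵥ t ≤ β * (t ⬝ᵥ M₁⁻¹ *ᵥ t)
    ∧ t ⬝ᵥ (β⁻¹ • M₁ + (1 - β)⁻¹ • M₂)⁻¹ *ᵥ t ≤ (1 - β) * (t ⬝ᵥ M₂⁻¹ *ᵥ t) := by
  obtain ⟨hβ0, hβ1⟩ := hβ
  have hβ1' : (0:ℝ) < 1 - β := by linarith
  set N := β⁻¹ • M₁ + (1 - β)⁻¹ • M₂ with hNdef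
  have hN : N.PosDef := posdef_comb h₁ h₂ hβ0 hβ1'
  set d := N⁻¹ *ᵥ t with hd
  have hval : t ⬝ᵥ N⁻¹ *ᵥ t = β⁻¹ * (d ⬝ᵥ M₁ *ᵥ d) + (1 - β)⁻¹ * (d ⬝ᵥ M₂ *ᵥ d) := by
    rw [phi_eq hN, ← hd, hNdef, comb_apply]
  have hval' : t ⬝ᵥ N⁻¹ *ᵥ t = t ⬝ᵥ d := rfl
  have ha1 := amgm_quad h₁ hβ0 t d
  have ha2 := amgm_quad h₂ hβ1' t d
  have hpos1 : 0 ≤ d ⬝ᵥ M₁ *ᵥ d := dot_nonneg h₁ d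
  have hpos2 : 0 ≤ d ⬝ᵥ M₂ *ᵥ d := dot_nonneg h₂ d
  have hb1 : 0 < β⁻¹ := inv_pos.mpr hβ0
  have hb2 : 0 < (1 - β)⁻¹ := inv_pos.mpr hβ1'
  constructor
  · nlinarith [hval, hval', ha1, mul_nonneg hb2.le hpos2]
  · nlinarith [hval, hval', ha2, mul_nonneg hb1.le hpos1]

lemma alg_min (a b sa sb : ℝ) (hsa : 0 < sa) (hsb : 0 < sb)
    (hsa2 : sa ^ 2 = a) (hsb2 : sb ^ 2 = b) :
    (sa / (sa + sb))⁻¹ * a + (1 - sa / (sa + sb))⁻¹ * b = (sa + sb) ^ 2 := by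
  have hsab : 0 < sa + sb := by linarith
  have h1 : 1 - sa / (sa + sb) = sb / (sa + sb) := by field_simp; ring
  rw [h1, inv_div, inv_div, ← hsa2, ← hsb2]
  field_simp

lemma alg_eq (m β β₂ a b sa sb : ℝ) (hβ : 0 < β) (hβ₂ : 0 < β₂) (hsum : β + β₂ = 1)
    (hsa : 0 < sa) (hsb : 0 < sb) (hsa2 : sa ^ 2 = a) (hsb2 : sb ^ 2 = b)
    (hma : m = β⁻¹ * a + β₂⁻¹ * b) (hup : m ≤ (sa + sb) ^ 2) :
    a = m * β ^ 2 ∧ b = m * β₂ ^ 2 := by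
  subst hsa2 hsb2
  have h1 : β₂ = 1 - β := by linarith
  subst h1
  have hmb : m * β * (1 - β) = sa ^ 2 * (1 - β) + sb ^ 2 * β := by
    rw [hma]; field_simp
  have hdown : (sa + sb) ^ 2 ≤ m := by
    nlinarith [sq_nonneg (sa * (1 - β) - sb * β), mul_pos hβ hβ₂]
  have hmeq : m = (sa + sb) ^ 2 := le_antisymm hup hdown
  have hsq : (sa * (1 - β) - sb * β) ^ 2 = 0 := by
    linear_combination (-1) * hmb + β * (1 - β) * hmeq
  have heq : sa * (1 - β) = sb * β := by
    have h2 := pow_eq_zero_iff (n := 2) (by norm_num) |>.mp hsq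
    linarith [sub_eq_zero.mp h2]
  have hba : sb ^ 2 * β ^ 2 = sa ^ 2 * (1 - β) ^ 2 := by nlinarith
  have ha2 : sa ^ 2 = m * β ^ 2 := by
    have key : sa ^ 2 * (1 - β) = m * β ^ 2 * (1 - β) := by
      linear_combination (-β) * hmb - hba - sa ^ 2 * (1 - β) * hsum
    exact mul_right_cancel₀ hβ₂.ne' key
  refine ⟨ha2, ?_⟩
  have key : sb ^ 2 * β ^ 2 = m * (1 - β) ^ 2 * β ^ 2 := by
    linear_combination hba + (1 - β) ^ 2 * ha2
  exact mul_right_cancel₀ (by positivity) key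

lemma exists_common_point (M₁ M₂ : Matrix (Fin n) (Fin n) ℝ) (h₁ : M₁.PosDef) (h₂ : M₂.PosDef)
    (t₁ t₂ : Fin n → ℝ)
    (hφ : ∀ β : ℝ, β ∈ Set.Ioo (0:ℝ) 1 →
      (t₁ - t₂) ⬝ᵥ (β⁻¹ • M₁ + (1 - β)⁻¹ • M₂)⁻¹ *ᵥ (t₁ - t₂) < 1) :
    ∃ τ : Fin n → ℝ, (τ - t₁) ⬝ᵥ M₁⁻¹ *ᵥ (τ - t₁) < 1
      ∧ (τ - t₂) ⬝ᵥ M₂⁻¹ *ᵥ (τ - t₂) < 1 := by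
  set t := t₁ - t₂ with htdef
  by_cases ht : t = 0
  · refine ⟨t₁, ?_, ?_⟩
    · simp
    · have ht₂ : t₂ = t₁ := by
        have := sub_eq_zero.mp ht
        exact this.symm
      rw [ht₂]
      simp
  · -- notation
    set φ : ℝ → ℝ := fun β => t ⬝ᵥ (β⁻¹ • M₁ + (1 - β)⁻¹ • M₂)⁻¹ *ᵥ t with hφdef
    have hcont : ContinuousOn φ (Set.Ioo 0 1) := continuousOn_phi M₁ M₂ h₁ h₂ t
    have hc₁ : 0 < t ⬝ᵥ M₁⁻¹ *ᵥ t := dot_pos h₁.inv ht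
    have hc₂ : 0 < t ⬝ᵥ M₂⁻¹ *ᵥ t := dot_pos h₂.inv ht
    set c₁ := t ⬝ᵥ M₁⁻¹ *ᵥ t
    set c₂ := t ⬝ᵥ M₂⁻¹ *ᵥ t
    have hhalfIoo : (1/2 : ℝ) ∈ Set.Ioo (0:ℝ) 1 := by norm_num
    have hNhalf : ((1/2 : ℝ)⁻¹ • M₁ + (1 - 1/2 : ℝ)⁻¹ • M₂).PosDef :=
      posdef_comb h₁ h₂ (by norm_num) (by norm_num)
    have hφhalf : 0 < φ (1/2) := dot_pos hNhalf.inv ht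
    set ε : ℝ := min (1/4) (min (φ (1/2) / (2 * c₁)) (φ (1/2) / (2 * c₂))) with hεdef
    have hε0 : 0 < ε := by
      apply lt_min (by norm_num)
      exact lt_min (by positivity) (by positivity)
    have hε4 : ε ≤ 1/4 := min_le_left _ _
    have hεc₁ : ε * c₁ ≤ φ (1/2) / 2 := by
      calc ε * c₁ ≤ (φ (1/2) / (2 * c₁)) * c₁ := by
            apply mul_le_mul_of_nonneg_right _ hc₁.le
            exact (min_le_right _ _).trans (min_le_left _ _)
        _ = φ (1/2) / 2 := by field_simp
    have hεc₂ : ε * c₂ ≤ φ (1/2) / 2 := by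
      calc ε * c₂ ≤ (φ (1/2) / (2 * c₂)) * c₂ := by
            apply mul_le_mul_of_nonneg_right _ hc₂.le
            exact (min_le_right _ _).trans (min_le_right _ _)
        _ = φ (1/2) / 2 := by field_simp
    have hKsub : Set.Icc ε (1 - ε) ⊆ Set.Ioo (0:ℝ) 1 := by
      intro x hx
      exact ⟨lt_of_lt_of_le hε0 hx.1, lt_of_le_of_lt hx.2 (by linarith)⟩
    have hhalfK : (1/2 : ℝ) ∈ Set.Icc ε (1 - ε) := by
      constructor <;> [linarith; linarith]
    obtain ⟨β, hβK, hmax⟩ := isCompact_Icc.exists_isMaxOn ⟨1/2, hhalfK⟩ (hcont.mono hKsub)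
    have hβIoo : β ∈ Set.Ioo (0:ℝ) 1 := hKsub hβK
    have hφhalf_le : φ (1/2) ≤ φ β := hmax hhalfK
    have hglobal : ∀ β' ∈ Set.Ioo (0:ℝ) 1, φ β' ≤ φ β := by
      intro β' hβ'
      by_cases hβ'K : β' ∈ Set.Icc ε (1 - ε)
      · exact hmax hβ'K
      · rw [Set.mem_Icc, not_and_or] at hβ'K
        rcases hβ'K with h | h
        · push_neg at h
          have hb := (phi_le h₁ h₂ t hβ').1
          calc φ β' ≤ β' * c₁ := hb
            _ ≤ ε * c₁ := mul_le_mul_of_nonneg_right h.le hc₁.le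
            _ ≤ φ (1/2) / 2 := hεc₁
            _ ≤ φ (1/2) := by linarith
            _ ≤ φ β := hφhalf_le
        · push_neg at h
          have hb := (phi_le h₁ h₂ t hβ').2
          calc φ β' ≤ (1 - β') * c₂ := hb
            _ ≤ ε * c₂ := mul_le_mul_of_nonneg_right (by linarith) hc₂.le
            _ ≤ φ (1/2) / 2 := hεc₂
            _ ≤ φ (1/2) := by linarith
            _ ≤ φ β := hφhalf_le
    -- now analyze at the maximizer
    obtain ⟨hβ0, hβ1⟩ := hβIoo
    have hβ₂0 : (0:ℝ) < 1 - β := by linarith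
    set β₂ : ℝ := 1 - β with hβ₂def
    set N := β⁻¹ • M₁ + β₂⁻¹ • M₂ with hNdef
    have hN : N.PosDef := posdef_comb h₁ h₂ hβ0 hβ₂0
    set d := N⁻¹ *ᵥ t with hddef
    have hNd : N *ᵥ d = t := mulVec_inv_cancel hN t
    have hd0 : d ≠ 0 := by
      intro h
      apply ht
      rw [← hNd, h, mulVec_zero]
    set a := d ⬝ᵥ M₁ *ᵥ d with hadef
    set b := d ⬝ᵥ M₂ *ᵥ d with hbdef
    have ha : 0 < a := dot_pos h₁ hd0
    have hb : 0 < b := dot_pos h₂ hd0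
    set m := φ β with hmdef
    have hm1 : m < 1 := hφ β ⟨hβ0, hβ1⟩
    have hmval : m = t ⬝ᵥ d := rfl
    have hma : m = β⁻¹ * a + β₂⁻¹ * b := by
      rw [hmdef, hφdef]
      show t ⬝ᵥ N⁻¹ *ᵥ t = _
      rw [phi_eq hN, ← hddef, hNdef, comb_apply, ← hadef, ← hbdef]
    have hmin : ∀ β' ∈ Set.Ioo (0:ℝ) 1, m ≤ β'⁻¹ * a + (1 - β')⁻¹ * b := by
      intro β' hβ'
      have hβ'₂ : (0:ℝ) < 1 - β' := by linarith [hβ'.2]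
      have hN' : (β'⁻¹ • M₁ + (1 - β')⁻¹ • M₂).PosDef := posdef_comb h₁ h₂ hβ'.1 hβ'₂
      have h4 := lower_bound_inv_quad hN' t d
      have hdN' : d ⬝ᵥ (β'⁻¹ • M₁ + (1 - β')⁻¹ • M₂) *ᵥ d = β'⁻¹ * a + (1 - β')⁻¹ * b := by
        rw [comb_apply, ← hadef, ← hbdef]
      rw [hdN'] at h4
      have h5 : t ⬝ᵥ (β'⁻¹ • M₁ + (1 - β')⁻¹ • M₂)⁻¹ *ᵥ t ≤ m := hglobal β' hβ'
      rw [← hmval] at h4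
      linarith
    set sa := Real.sqrt a with hsadef
    set sb := Real.sqrt b with hsbdef
    have hsa : 0 < sa := Real.sqrt_pos.mpr ha
    have hsb : 0 < sb := Real.sqrt_pos.mpr hb
    have hsa2 : sa ^ 2 = a := Real.sq_sqrt ha.le
    have hsb2 : sb ^ 2 = b := Real.sq_sqrt hb.le
    have hsab : 0 < sa + sb := by linarith
    have hβ'Ioo : sa / (sa + sb) ∈ Set.Ioo (0:ℝ) 1 := by
      constructor
      · positivity
      · rw [div_lt_one hsab]; linarith
    have hup : m ≤ (sa + sb) ^ 2 := by
      have h6 := hmin _ hβ'Ioo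
      rw [alg_min a b sa sb hsa hsb hsa2 hsb2] at h6
      exact h6
    obtain ⟨ha2, hb2⟩ := alg_eq m β β₂ a b sa sb hβ0 hβ₂0 (by rw [hβ₂def]; ring)
      hsa hsb hsa2 hsb2 hma hup
    -- the common point
    refine ⟨t₁ - β⁻¹ • (M₁ *ᵥ d), ?_, ?_⟩
    · have hτ1 : t₁ - β⁻¹ • (M₁ *ᵥ d) - t₁ = -(β⁻¹ • (M₁ *ᵥ d)) := by abel
      rw [hτ1]
      have hcancel : M₁⁻¹ *ᵥ (M₁ *ᵥ d) = d := by
        rw [mulVec_mulVec, Matrix.nonsing_inv_mul _ h₁.det_pos.ne'.isUnit, one_mulVec]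
      have hval : (-(β⁻¹ • (M₁ *ᵥ d))) ⬝ᵥ M₁⁻¹ *ᵥ (-(β⁻¹ • (M₁ *ᵥ d)))
          = β⁻¹ ^ 2 * a := by
        rw [mulVec_neg, dotProduct_neg, neg_dotProduct, neg_neg, smul_dotProduct,
          mulVec_smul, dotProduct_smul, smul_eq_mul, smul_eq_mul, hcancel]
        rw [dotProduct_comm, ← hadef]
        ring
      rw [hval, ha2]
      have : β⁻¹ ^ 2 * (m * β ^ 2) = m := by field_simp
      rw [this]
      exact hm1
    · have ht2 : t = β⁻¹ • (M₁ *ᵥ d) + β₂⁻¹ • (M₂ *ᵥ d) := by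
        rw [← hNd, hNdef, add_mulVec, smul_mulVec, smul_mulVec]
      have hτ2 : t₁ - β⁻¹ • (M₁ *ᵥ d) - t₂ = β₂⁻¹ • (M₂ *ᵥ d) := by
        have : t₁ - β⁻¹ • (M₁ *ᵥ d) - t₂ = t - β⁻¹ • (M₁ *ᵥ d) := by
          rw [htdef]; abel
        rw [this, ht2]; abel
      rw [hτ2]
      have hcancel : M₂⁻¹ *ᵥ (M₂ *ᵥ d) = d := by
        rw [mulVec_mulVec, Matrix.nonsing_inv_mul _ h₂.det_pos.ne'.isUnit, one_mulVec]
      have hval : (β₂⁻¹ • (M₂ *ᵥ d)) ⬝ᵥ M₂⁻¹ *ᵥ (β₂⁻¹ • (M₂ *ᵥ d)) = β₂⁻¹ ^ 2 * b := by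
        rw [smul_dotProduct, mulVec_smul, dotProduct_smul, smul_eq_mul, smul_eq_mul, hcancel]
        rw [dotProduct_comm, ← hbdef]
        ring
      rw [hval, hb2]
      have : β₂⁻¹ ^ 2 * (m * β₂ ^ 2) = m := by field_simp
      rw [this]
      exact hm1

/-- The interiors of two ellipsoids are disjoint iff there exist β₁*, β₂* > 0 with
β₁* + β₂* = 1 such that t₁ - t₂ is not in the interior of E(0, M₁/β₁* + M₂/β₂*). -/
theorem interiors_disjoint_iff_exists_over_approximation {n : ℕ}
    (M₁ M₂ : Matrix (Fin n) (Fin n) ℝ) (h₁ : M₁.PosDef) (h₂ : M₂.PosDef)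
    (t₁ t₂ : Fin n → ℝ) :
    Disjoint (interior {τ : Fin n → ℝ | (τ - t₁) ⬝ᵥ M₁⁻¹ *ᵥ (τ - t₁) ≤ 1})
        (interior {τ : Fin n → ℝ | (τ - t₂) ⬝ᵥ M₂⁻¹ *ᵥ (τ - t₂) ≤ 1}) ↔
      ∃ β₁ β₂ : ℝ, 0 < β₁ ∧ 0 < β₂ ∧ β₁ + β₂ = 1 ∧
        t₁ - t₂ ∉ interior {τ : Fin n → ℝ | τ ⬝ᵥ (β₁⁻¹ • M₁ + β₂⁻¹ • M₂)⁻¹ *ᵥ τ ≤ 1} := by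
  rw [interior_ellipsoid M₁⁻¹ t₁, interior_ellipsoid M₂⁻¹ t₂]
  constructor
  · intro hdis
    by_contra hcon
    push_neg at hcon
    have hφ : ∀ β : ℝ, β ∈ Set.Ioo (0:ℝ) 1 →
        (t₁ - t₂) ⬝ᵥ (β⁻¹ • M₁ + (1 - β)⁻¹ • M₂)⁻¹ *ᵥ (t₁ - t₂) < 1 := by
      intro β hβ
      have h := hcon β (1 - β) hβ.1 (by linarith [hβ.2]) (by ring)
      rw [interior_ellipsoid0] at h
      exact h
    obtain ⟨τ, hm1, hm2⟩ := exists_common_point M₁ M₂ h₁ h₂ t₁ t₂ hφ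
    exact Set.not_disjoint_iff.mpr ⟨τ, hm1, hm2⟩ hdis
  · rintro ⟨β₁, β₂, hb₁, hb₂, hsum, hnotin⟩
    rw [interior_ellipsoid0] at hnotin
    rw [Set.disjoint_left]
    intro τ hτ1 hτ2
    apply hnotin
    rw [Set.mem_setOf_eq]
    rw [Set.mem_setOf_eq] at hτ1 hτ2
    set N := β₁⁻¹ • M₁ + β₂⁻¹ • M₂ with hNdef
    have hN : N.PosDef := posdef_comb h₁ h₂ hb₁ hb₂
    set d := N⁻¹ *ᵥ (t₁ - t₂) with hddef
    have hNd : N *ᵥ d = t₁ - t₂ := mulVec_inv_cancel hN _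
    have ham2 := amgm_quad h₂ hb₂ (τ - t₂) d
    have ham1 := amgm_quad h₁ hb₁ (-(τ - t₁)) d
    have hneg : (-(τ - t₁)) ⬝ᵥ M₁⁻¹ *ᵥ (-(τ - t₁)) = (τ - t₁) ⬝ᵥ M₁⁻¹ *ᵥ (τ - t₁) := by
      rw [mulVec_neg, dotProduct_neg, neg_dotProduct, neg_neg]
    rw [hneg, neg_dotProduct] at ham1
    have hdNd : d ⬝ᵥ N *ᵥ d = β₁⁻¹ * (d ⬝ᵥ M₁ *ᵥ d) + β₂⁻¹ * (d ⬝ᵥ M₂ *ᵥ d) := by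
      rw [hNdef, comb_apply]
    have hdt : d ⬝ᵥ N *ᵥ d = (t₁ - t₂) ⬝ᵥ d := by
      rw [hNd, dotProduct_comm]
    have hsplit : (t₁ - t₂) ⬝ᵥ d = (τ - t₂) ⬝ᵥ d - (τ - t₁) ⬝ᵥ d := by
      rw [← sub_dotProduct]
      congr 1
      abel
    have hgoal : (t₁ - t₂) ⬝ᵥ N⁻¹ *ᵥ (t₁ - t₂) = (t₁ - t₂) ⬝ᵥ d := rfl
    rw [hgoal]
    nlinarith [hτ1, hτ2, mul_lt_mul_of_pos_left hτ1 hb₁, mul_lt_mul_of_pos_left hτ2 hb₂]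
end

section
/- Let E(t₁,M₁) and E(t₂,M₂) be ellipsoids with t₁ ≠ t₂. If there exists γ ∈ ℝ such that (t₁−t₂)ᵀ ((1+exp(γ))M₁ + (1+exp(−γ))M₂)⁻¹ (t₁−t₂) ≥ 1, then the interiors of E(t₁,M₁) and E(t₂,M₂) do not intersect. -/
open Matrix Real

private lemma smul_posDef {n : ℕ} {A : Matrix (Fin n) (Fin n) ℝ} (hA : A.PosDef) {α : ℝ}
    (hα : 0 < α) : (α • A).PosDef := by
  rw [posDef_iff_dotProduct_mulVec]
  constructor
  · show (α • A)ᴴ = α • A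
    rw [conjTranspose_smul, star_trivial, hA.1]
  · intro x hx
    simp only [smul_mulVec, dotProduct_smul, smul_eq_mul]
    exact mul_pos hα (by simpa using hA.dotProduct_mulVec_pos hx)

/-- Cauchy–Schwarz for a positive definite matrix. -/
private lemma cs_posDef {n : ℕ} {A : Matrix (Fin n) (Fin n) ℝ} (hA : A.PosDef)
    (a c : Fin n → ℝ) :
    (c ⬝ᵥ a) ^ 2 ≤ (c ⬝ᵥ A *ᵥ c) * (a ⬝ᵥ A⁻¹ *ᵥ a) := by
  have hdet : IsUnit A.det := (Matrix.isUnit_iff_isUnit_det A).mp hA.isUnit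
  have hinv : A⁻¹ * A = 1 := nonsing_inv_mul A hdet
  have hAA : A * A⁻¹ = 1 := mul_nonsing_inv A hdet
  have hsymm : Aᵀ = A := by
    rw [← conjTranspose_eq_transpose_of_trivial, hA.1]
  have key : ∀ t : ℝ, 0 ≤ (c ⬝ᵥ A *ᵥ c) * (t * t) + (2 * (c ⬝ᵥ a)) * t + (a ⬝ᵥ A⁻¹ *ᵥ a) := by
    intro t
    have h0 := (hA.inv).posSemidef.dotProduct_mulVec_nonneg (a + t • (A *ᵥ c))
    simp only [star_trivial] at h0
    have e1 : A⁻¹ *ᵥ (A *ᵥ c) = c := by rw [mulVec_mulVec, hinv, one_mulVec]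
    have e2 : (A *ᵥ c) ⬝ᵥ (A⁻¹ *ᵥ a) = c ⬝ᵥ a := by
      have hAc : A *ᵥ c = c ᵥ* A := by
        conv_lhs => rw [← hsymm]
        exact mulVec_transpose A c
      rw [hAc, ← dotProduct_mulVec, mulVec_mulVec, hAA, one_mulVec]
    have e3 : (A *ᵥ c) ⬝ᵥ c = c ⬝ᵥ A *ᵥ c := dotProduct_comm _ _
    calc (0:ℝ) ≤ (a + t • (A *ᵥ c)) ⬝ᵥ A⁻¹ *ᵥ (a + t • (A *ᵥ c)) := h0
    _ = (c ⬝ᵥ A *ᵥ c) * (t * t) + (2 * (c ⬝ᵥ a)) * t + (a ⬝ᵥ A⁻¹ *ᵥ a) := by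
        simp only [mulVec_add, mulVec_smul, e1, dotProduct_add, add_dotProduct,
          dotProduct_smul, smul_dotProduct, smul_eq_mul, e2, e3]
        rw [dotProduct_comm a c]
        ring
  have hd := discrim_le_zero key
  rw [discrim] at hd
  nlinarith [hd]

private lemma interior_lt {n : ℕ} {A : Matrix (Fin n) (Fin n) ℝ} (hA : A.PosDef)
    (t x : Fin n → ℝ)
    (hx : x ∈ interior {τ : Fin n → ℝ | (τ - t) ⬝ᵥ A⁻¹ *ᵥ (τ - t) ≤ 1}) :
    (x - t) ⬝ᵥ A⁻¹ *ᵥ (x - t) < 1 := by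
  by_cases hxt : x = t
  · simp [hxt]
  · have hpos : 0 < (x - t) ⬝ᵥ A⁻¹ *ᵥ (x - t) := by
      simpa using (hA.inv).dotProduct_mulVec_pos (sub_ne_zero.mpr hxt)
    obtain ⟨ε, hε, hball⟩ := Metric.mem_nhds_iff.mp (mem_interior_iff_mem_nhds.mp hx)
    have hnorm : 0 < ‖x - t‖ := norm_pos_iff.mpr (sub_ne_zero.mpr hxt)
    set δ : ℝ := ε / (2 * ‖x - t‖) with hδdef
    have hδ : 0 < δ := by positivity
    have hmem : x + δ • (x - t) ∈ Metric.ball x ε := by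
      rw [Metric.mem_ball, dist_eq_norm, add_sub_cancel_left, norm_smul,
        Real.norm_eq_abs, abs_of_pos hδ]
      have heq2 : δ * ‖x - t‖ = ε / 2 := by
        rw [hδdef]; field_simp
      rw [heq2]; linarith
    have h1 : ((x + δ • (x - t)) - t) ⬝ᵥ A⁻¹ *ᵥ ((x + δ • (x - t)) - t) ≤ 1 := hball hmem
    have heq : (x + δ • (x - t)) - t = (1 + δ) • (x - t) := by
      funext i
      simp only [Pi.add_apply, Pi.sub_apply, Pi.smul_apply, smul_eq_mul]
      ring
    rw [heq, smul_dotProduct, mulVec_smul, dotProduct_smul, smul_eq_mul,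
      smul_eq_mul] at h1
    nlinarith [h1, hpos, hδ, mul_pos hδ hpos, mul_pos (mul_pos hδ hδ) hpos,
      mul_pos hδ hδ]

/-- If for some γ ∈ ℝ the point t₁ - t₂ satisfies
(t₁-t₂)ᵀ((1+e^γ)M₁ + (1+e^{-γ})M₂)⁻¹(t₁-t₂) ≥ 1, then the interiors of E(t₁,M₁)
and E(t₂,M₂) do not intersect. -/
theorem fixed_gamma_constraint_implies_collision_free {n : ℕ}
    (M₁ M₂ : Matrix (Fin n) (Fin n) ℝ) (h₁ : M₁.PosDef) (h₂ : M₂.PosDef)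
    (t₁ t₂ : Fin n → ℝ) (hne : t₁ ≠ t₂)
    (h : ∃ γ : ℝ, 1 ≤ (t₁ - t₂) ⬝ᵥ
        ((1 + Real.exp γ) • M₁ + (1 + Real.exp (-γ)) • M₂)⁻¹ *ᵥ (t₁ - t₂)) :
    Disjoint (interior {τ : Fin n → ℝ | (τ - t₁) ⬝ᵥ M₁⁻¹ *ᵥ (τ - t₁) ≤ 1})
      (interior {τ : Fin n → ℝ | (τ - t₂) ⬝ᵥ M₂⁻¹ *ᵥ (τ - t₂) ≤ 1}) := by
  rw [Set.disjoint_left]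
  intro x hx1 hx2
  obtain ⟨γ, hγ⟩ := h
  set α₁ : ℝ := 1 + Real.exp γ with hα₁def
  set α₂ : ℝ := 1 + Real.exp (-γ) with hα₂def
  have hα₁ : 0 < α₁ := by positivity
  have hα₂ : 0 < α₂ := by positivity
  have hsum : 1 / α₁ + 1 / α₂ = 1 := by
    rw [hα₁def, hα₂def, Real.exp_neg]
    have h1 : Real.exp γ > 0 := Real.exp_pos γ
    field_simp
    ring
  set M : Matrix (Fin n) (Fin n) ℝ := α₁ • M₁ + α₂ • M₂ with hMdef
  have hM : M.PosDef := (smul_posDef h₁ hα₁).add (smul_posDef h₂ hα₂)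
  have hdet : IsUnit M.det := (Matrix.isUnit_iff_isUnit_det M).mp hM.isUnit
  set d : Fin n → ℝ := t₁ - t₂ with hddef
  set c : Fin n → ℝ := M⁻¹ *ᵥ d with hcdef
  have hMc : M *ᵥ c = d := by
    rw [hcdef, mulVec_mulVec, mul_nonsing_inv _ hdet, one_mulVec]
  have hd0 : d ≠ 0 := sub_ne_zero.mpr hne
  have hc0 : c ≠ 0 := by
    intro hc
    exact hd0 (by rw [← hMc, hc, mulVec_zero])
  have hP : 0 < c ⬝ᵥ M₁ *ᵥ c := by simpa using h₁.dotProduct_mulVec_pos hc0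
  have hQ : 0 < c ⬝ᵥ M₂ *ᵥ c := by simpa using h₂.dotProduct_mulVec_pos hc0
  set P : ℝ := c ⬝ᵥ M₁ *ᵥ c
  set Q : ℝ := c ⬝ᵥ M₂ *ᵥ c
  have hs1 : (1:ℝ) ≤ c ⬝ᵥ d := by
    rw [dotProduct_comm]
    exact hγ
  have hsval : c ⬝ᵥ d = α₁ * P + α₂ * Q := by
    rw [← hMc, hMdef, add_mulVec, smul_mulVec, smul_mulVec,
      dotProduct_add, dotProduct_smul, dotProduct_smul, smul_eq_mul, smul_eq_mul]
  -- interiors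
  have he₁ : (x - t₁) ⬝ᵥ M₁⁻¹ *ᵥ (x - t₁) < 1 := interior_lt h₁ t₁ x hx1
  have he₂ : (x - t₂) ⬝ᵥ M₂⁻¹ *ᵥ (x - t₂) < 1 := interior_lt h₂ t₂ x hx2
  have he₁0 : 0 ≤ (x - t₁) ⬝ᵥ M₁⁻¹ *ᵥ (x - t₁) := by
    simpa using (h₁.inv).posSemidef.dotProduct_mulVec_nonneg (x - t₁)
  have he₂0 : 0 ≤ (x - t₂) ⬝ᵥ M₂⁻¹ *ᵥ (x - t₂) := by
    simpa using (h₂.inv).posSemidef.dotProduct_mulVec_nonneg (x - t₂)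
  set e₁ : ℝ := (x - t₁) ⬝ᵥ M₁⁻¹ *ᵥ (x - t₁)
  set e₂ : ℝ := (x - t₂) ⬝ᵥ M₂⁻¹ *ᵥ (x - t₂)
  have hu : (c ⬝ᵥ (x - t₂)) ^ 2 ≤ Q * e₂ := cs_posDef h₂ (x - t₂) c
  have hv : (c ⬝ᵥ (x - t₁)) ^ 2 ≤ P * e₁ := cs_posDef h₁ (x - t₁) c
  set u : ℝ := c ⬝ᵥ (x - t₂)
  set v : ℝ := c ⬝ᵥ (x - t₁)
  have hsplit : c ⬝ᵥ d = u - v := by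
    have : d = (x - t₂) - (x - t₁) := by rw [hddef]; abel
    rw [this, dotProduct_sub]
  -- square roots
  set sp : ℝ := Real.sqrt P with hspdef
  set sq : ℝ := Real.sqrt Q with hsqdef
  have hsp : 0 < sp := Real.sqrt_pos.mpr hP
  have hsq : 0 < sq := Real.sqrt_pos.mpr hQ
  have hsp2 : sp ^ 2 = P := Real.sq_sqrt hP.le
  have hsq2 : sq ^ 2 = Q := Real.sq_sqrt hQ.le
  have hu' : u < sq := by nlinarith [hu, he₂, hsq, hsq2, mul_pos hQ (by linarith : (0:ℝ) < 1 - e₂)]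
  have hv' : -v < sp := by nlinarith [hv, he₁, hsp, hsp2, mul_pos hP (by linarith : (0:ℝ) < 1 - e₁)]
  set s : ℝ := c ⬝ᵥ d
  have hstep2 : s < sp + sq := by rw [hsplit]; linarith
  set β₁ : ℝ := 1 / α₁ with hβ₁def
  set β₂ : ℝ := 1 / α₂ with hβ₂def
  have hβ₁ : 0 < β₁ := by positivity
  have hβ₂ : 0 < β₂ := by positivity
  have hβα₁ : α₁ * β₁ = 1 := by rw [hβ₁def]; field_simp
  have hβα₂ : α₂ * β₂ = 1 := by rw [hβ₂def]; field_simp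
  have hsval' : s = α₁ * sp ^ 2 + α₂ * sq ^ 2 := by rw [hsp2, hsq2]; exact hsval
  clear_value s sp sq u v e₁ e₂ P Q β₁ β₂ c d M α₁ α₂
  clear hγ hMc hsval hu hv hsplit hx1 hx2 hd0 hc0 hP hQ he₁ he₂ he₁0 he₂0 hM hdet
    hα₁ hα₂ hsp2 hsq2 hu' hv' hne h₁ h₂ hcdef hddef hMdef hα₁def hα₂def hspdef hsqdef u v e₁ e₂ P Q c d M M₁ M₂ t₁ t₂ x
  have hdiff : s * (β₁ * β₂) - (sp + sq) ^ 2 * (β₁ * β₂) = (β₂ * sp - β₁ * sq) ^ 2 := by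
    rw [hsval']
    linear_combination (sp ^ 2 * β₂) * hβα₁ + (sq ^ 2 * β₁) * hβα₂ -
      (β₂ * sp ^ 2 + β₁ * sq ^ 2) * hsum
  have h0 : 0 ≤ (s - (sp + sq) ^ 2) * (β₁ * β₂) := by
    rw [sub_mul, hdiff]
    exact sq_nonneg _
  have hstep3 : (sp + sq) ^ 2 ≤ s := by nlinarith [h0, mul_pos hβ₁ hβ₂]
  nlinarith [hstep2, hstep3, hs1, sq_nonneg (sp + sq - 1)]
end

section
/- The Minkowski sum of two origin-centered ellipsoids equals the intersection over all valid parameters of the over-approximating ellipsoids: E(0,M₁) ⊕ E(0,M₂) = ⋂_{β₁,β₂>0, β₁+β₂=1} E(0, M₁/β₁ + M₂/β₂). -/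
open Matrix Real Pointwise

variable {n : ℕ}

private lemma qf_nonneg {P : Matrix (Fin n) (Fin n) ℝ} (hP : P.PosSemidef) (x : Fin n → ℝ) :
    0 ≤ x ⬝ᵥ P *ᵥ x := by simpa using hP.dotProduct_mulVec_nonneg x

private lemma qf_pos {P : Matrix (Fin n) (Fin n) ℝ} (hP : P.PosDef) {x : Fin n → ℝ} (hx : x ≠ 0) :
    0 < x ⬝ᵥ P *ᵥ x := by simpa using hP.dotProduct_mulVec_pos hx

private lemma transpose_eq {P : Matrix (Fin n) (Fin n) ℝ} (hP : P.IsHermitian) : Pᵀ = P := by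
  rw [← conjTranspose_eq_transpose_of_trivial]; exact hP

private lemma qf_symm {P : Matrix (Fin n) (Fin n) ℝ} (hP : P.IsHermitian) (x y : Fin n → ℝ) :
    x ⬝ᵥ P *ᵥ y = y ⬝ᵥ P *ᵥ x := by
  rw [dotProduct_mulVec]
  conv_lhs => rw [← transpose_eq hP]
  rw [vecMul_transpose, dotProduct_comm]

private lemma cs_psd {P : Matrix (Fin n) (Fin n) ℝ} (hP : P.PosSemidef) (x y : Fin n → ℝ) :
    (x ⬝ᵥ P *ᵥ y) ^ 2 ≤ (x ⬝ᵥ P *ᵥ x) * (y ⬝ᵥ P *ᵥ y) := by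
  set X := x ⬝ᵥ P *ᵥ x with hX
  set Y := y ⬝ᵥ P *ᵥ y with hY
  set Z := x ⬝ᵥ P *ᵥ y with hZ
  have expand : ∀ t : ℝ, 0 ≤ X - 2 * t * Z + t ^ 2 * Y := by
    intro t
    have h0 := qf_nonneg hP (x - t • y)
    have he : (x - t • y) ⬝ᵥ P *ᵥ (x - t • y) = X - 2 * t * Z + t ^ 2 * Y := by
      simp only [sub_dotProduct, dotProduct_sub, mulVec_sub, mulVec_smul, dotProduct_smul,
        smul_dotProduct, smul_eq_mul]
      rw [qf_symm hP.1 y x, ← hX, ← hY, ← hZ]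
      ring
    linarith [he ▸ h0]
  rcases eq_or_ne Y 0 with hY0 | hY0
  · have hZ0 : Z = 0 := by
      by_contra hZne
      have h1 := expand ((X + 1) / (2 * Z))
      rw [hY0] at h1
      have : 2 * ((X + 1) / (2 * Z)) * Z = X + 1 := by field_simp
      linarith [this ▸ h1]
    have hX0 := qf_nonneg hP x
    rw [hZ0, hY0]; nlinarith
  · have h1 := expand (Z / Y)
    have hYpos : 0 < Y := lt_of_le_of_ne (qf_nonneg hP y) (Ne.symm hY0)
    have h2 : X - Z ^ 2 / Y ≥ 0 := by
      have hh : 2 * (Z / Y) * Z = 2 * (Z ^ 2 / Y) := by ring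
      have h3 : (Z / Y) ^ 2 * Y = Z ^ 2 / Y := by field_simp
      rw [hh, h3] at h1
      linarith
    calc Z ^ 2 = Z ^ 2 / Y * Y := by field_simp
    _ ≤ X * Y := by nlinarith

private lemma cs_inv {N : Matrix (Fin n) (Fin n) ℝ} (hN : N.PosDef) (l x : Fin n → ℝ) :
    (l ⬝ᵥ x) ^ 2 ≤ (l ⬝ᵥ N *ᵥ l) * (x ⬝ᵥ N⁻¹ *ᵥ x) := by
  have hNi : N⁻¹.PosDef := hN.inv
  have hvm : ∀ v : Fin n → ℝ, (N *ᵥ v) ᵥ* N⁻¹ = v := by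
    intro v
    have : (N *ᵥ v) ᵥ* N⁻¹ = (N⁻¹)ᵀ *ᵥ (N *ᵥ v) := by
      rw [← transpose_eq hNi.1, vecMul_transpose, transpose_transpose]
    rw [this, transpose_eq hNi.1, mulVec_mulVec, nonsing_inv_mul _ ((Matrix.isUnit_iff_isUnit_det _).1 hN.isUnit), one_mulVec]
  have key1 : (N *ᵥ l) ⬝ᵥ N⁻¹ *ᵥ x = l ⬝ᵥ x := by
    rw [dotProduct_mulVec, hvm]
  have key2 : (N *ᵥ l) ⬝ᵥ N⁻¹ *ᵥ (N *ᵥ l) = l ⬝ᵥ N *ᵥ l := by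
    rw [dotProduct_mulVec, hvm]
  have h := cs_psd hNi.posSemidef (N *ᵥ l) x
  rw [key1, key2] at h
  exact h

private lemma posdef_add' {A B : Matrix (Fin n) (Fin n) ℝ} (hA : A.PosDef) (hB : B.PosDef) :
    (A + B).PosDef := by
  refine .of_dotProduct_mulVec_pos (hA.1.add hB.1) fun x hx => ?_
  have h1 := qf_pos hA hx
  have h2 := qf_pos hB hx
  simp only [add_mulVec, dotProduct_add, star_trivial]
  linarith

private lemma sum_qf_le {A B : Matrix (Fin n) (Fin n) ℝ} (hA : A.PosDef) (hB : B.PosDef)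
    (x y : Fin n → ℝ) :
    (x + y) ⬝ᵥ (A + B)⁻¹ *ᵥ (x + y) ≤ x ⬝ᵥ A⁻¹ *ᵥ x + y ⬝ᵥ B⁻¹ *ᵥ y := by
  have hC : (A + B).PosDef := posdef_add' hA hB
  set z := (A + B)⁻¹ *ᵥ (x + y) with hz
  have hCz : (A + B) *ᵥ z = x + y := by
    rw [hz, mulVec_mulVec, mul_nonsing_inv _ ((Matrix.isUnit_iff_isUnit_det _).1 hC.isUnit),
      one_mulVec]
  have bound : ∀ (M : Matrix (Fin n) (Fin n) ℝ), M.PosDef → ∀ w : Fin n → ℝ,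
      2 * (w ⬝ᵥ z) - z ⬝ᵥ M *ᵥ z ≤ w ⬝ᵥ M⁻¹ *ᵥ w := by
    intro M hM w
    have h0 := qf_nonneg hM.inv.posSemidef (w - M *ᵥ z)
    have hAi : M⁻¹ *ᵥ (M *ᵥ z) = z := by
      rw [mulVec_mulVec, nonsing_inv_mul _ ((Matrix.isUnit_iff_isUnit_det _).1 hM.isUnit),
        one_mulVec]
    have e1 : w ⬝ᵥ M⁻¹ *ᵥ (M *ᵥ z) = w ⬝ᵥ z := by rw [hAi]
    have e2 : (M *ᵥ z) ⬝ᵥ M⁻¹ *ᵥ w = w ⬝ᵥ z := by rw [qf_symm hM.inv.1 _ w, hAi]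
    have e3 : (M *ᵥ z) ⬝ᵥ M⁻¹ *ᵥ (M *ᵥ z) = z ⬝ᵥ M *ᵥ z := by rw [hAi, dotProduct_comm]
    simp only [sub_dotProduct, dotProduct_sub, mulVec_sub] at h0
    rw [e1, e2, e3] at h0
    linarith
  have hxz := bound A hA x
  have hyz := bound B hB y
  have hsum : z ⬝ᵥ A *ᵥ z + z ⬝ᵥ B *ᵥ z = x ⬝ᵥ z + y ⬝ᵥ z := by
    have h := congrArg (fun v => z ⬝ᵥ v) hCz
    simp only [add_mulVec, dotProduct_add] at h
    rw [h, dotProduct_comm z x, dotProduct_comm z y]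
  have hgoal : (x + y) ⬝ᵥ z = x ⬝ᵥ z + y ⬝ᵥ z := add_dotProduct _ _ _
  rw [hgoal]
  linarith

private lemma ellipsoid_compact {M : Matrix (Fin n) (Fin n) ℝ} (hM : M.PosDef) :
    IsCompact {τ : Fin n → ℝ | τ ⬝ᵥ M⁻¹ *ᵥ τ ≤ 1} := by
  rw [Metric.isCompact_iff_isClosed_bounded]
  constructor
  · have hcont : Continuous fun τ : Fin n → ℝ => ∑ i, τ i * ∑ j, M⁻¹ i j * τ j :=
      continuous_finset_sum _ fun i _ => (continuous_apply i).mul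
        (continuous_finset_sum _ fun j _ => continuous_const.mul (continuous_apply j))
    have hset : {τ : Fin n → ℝ | τ ⬝ᵥ M⁻¹ *ᵥ τ ≤ 1}
        = {τ : Fin n → ℝ | ∑ i, τ i * ∑ j, M⁻¹ i j * τ j ≤ 1} := rfl
    rw [hset]
    exact isClosed_le hcont continuous_const
  · rw [isBounded_iff_forall_norm_le]
    refine ⟨∑ i, √(M i i), fun τ hτ => ?_⟩
    rw [pi_norm_le_iff_of_nonneg (by positivity)]
    intro i
    have hcs := cs_inv hM (Pi.single i 1) τ
    rw [single_dotProduct, one_mul] at hcs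
    have hdiag : Pi.single i 1 ⬝ᵥ M *ᵥ Pi.single i 1 = M i i := by
      rw [single_dotProduct, one_mul, mulVec_single]; simp
    rw [hdiag] at hcs
    have hMii : 0 < M i i := by
      have := qf_pos hM (x := Pi.single i 1) (by simp [Pi.single_eq_same, Function.ne_iff])
      rwa [hdiag] at this
    have hq : τ ⬝ᵥ M⁻¹ *ᵥ τ ≤ 1 := hτ
    have hsq : (τ i) ^ 2 ≤ M i i := by nlinarith
    have h1 : |τ i| ≤ √(M i i) := by
      rw [← Real.sqrt_sq_eq_abs]
      exact Real.sqrt_le_sqrt hsq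
    calc ‖τ i‖ = |τ i| := rfl
    _ ≤ √(M i i) := h1
    _ ≤ ∑ j, √(M j j) := Finset.single_le_sum (f := fun j => √(M j j))
        (fun j _ => Real.sqrt_nonneg _) (Finset.mem_univ i)

private lemma ellipsoid_convex {M : Matrix (Fin n) (Fin n) ℝ} (hM : M.PosDef) :
    Convex ℝ {τ : Fin n → ℝ | τ ⬝ᵥ M⁻¹ *ᵥ τ ≤ 1} := by
  intro x hx y hy a b ha hb hab
  simp only [Set.mem_setOf_eq] at hx hy ⊢
  have hP := hM.inv
  have hX0 := qf_nonneg hP.posSemidef x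
  have hY0 := qf_nonneg hP.posSemidef y
  have hcs := cs_psd hP.posSemidef x y
  have expand : (a • x + b • y) ⬝ᵥ M⁻¹ *ᵥ (a • x + b • y)
      = a ^ 2 * (x ⬝ᵥ M⁻¹ *ᵥ x) + 2 * a * b * (x ⬝ᵥ M⁻¹ *ᵥ y)
        + b ^ 2 * (y ⬝ᵥ M⁻¹ *ᵥ y) := by
    simp only [add_dotProduct, dotProduct_add, mulVec_add, mulVec_smul, smul_dotProduct,
      dotProduct_smul, smul_eq_mul]
    rw [qf_symm hP.1 y x]
    ring
  rw [expand]
  have hZ1 : x ⬝ᵥ M⁻¹ *ᵥ y ≤ 1 := by nlinarith [sq_nonneg (x ⬝ᵥ M⁻¹ *ᵥ y - 1)]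
  nlinarith [mul_nonneg (sq_nonneg a) (sub_nonneg.2 hx),
    mul_nonneg (sq_nonneg b) (sub_nonneg.2 hy),
    mul_nonneg (mul_nonneg ha hb) (sub_nonneg.2 hZ1)]

private lemma mulVec_self_qf {M : Matrix (Fin n) (Fin n) ℝ} (hM : M.PosDef) (l : Fin n → ℝ) :
    (M *ᵥ l) ⬝ᵥ M⁻¹ *ᵥ (M *ᵥ l) = l ⬝ᵥ M *ᵥ l := by
  have hAi : M⁻¹ *ᵥ (M *ᵥ l) = l := by
    rw [mulVec_mulVec, nonsing_inv_mul _ ((Matrix.isUnit_iff_isUnit_det _).1 hM.isUnit),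
      one_mulVec]
  rw [hAi, dotProduct_comm]

private lemma posdef_smul {A : Matrix (Fin n) (Fin n) ℝ} (hA : A.PosDef) {c : ℝ} (hc : 0 < c) :
    (c • A).PosDef := by
  refine .of_dotProduct_mulVec_pos ?_ fun x hx => ?_
  · unfold Matrix.IsHermitian
    rw [conjTranspose_smul, hA.1]
    congr 1
  · have := qf_pos hA hx
    simp only [smul_mulVec, dotProduct_smul, smul_eq_mul, star_trivial]
    positivity

/-- The Minkowski sum of two origin-centered ellipsoids equals the intersection over
all valid parameters β₁, β₂ > 0, β₁ + β₂ = 1 of the over-approximating ellipsoids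
E(0, M₁/β₁ + M₂/β₂). -/
theorem minkowski_sum_eq_iInter_over_approximations {n : ℕ}
    (M₁ M₂ : Matrix (Fin n) (Fin n) ℝ) (h₁ : M₁.PosDef) (h₂ : M₂.PosDef) :
    {τ : Fin n → ℝ | τ ⬝ᵥ M₁⁻¹ *ᵥ τ ≤ 1} + {τ : Fin n → ℝ | τ ⬝ᵥ M₂⁻¹ *ᵥ τ ≤ 1} =
      ⋂ (β₁ : ℝ) (_ : 0 < β₁) (β₂ : ℝ) (_ : 0 < β₂) (_ : β₁ + β₂ = 1),
        {τ : Fin n → ℝ | τ ⬝ᵥ (β₁⁻¹ • M₁ + β₂⁻¹ • M₂)⁻¹ *ᵥ τ ≤ 1} := by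
  apply Set.Subset.antisymm
  · intro τ hτ
    rw [Set.mem_add] at hτ
    obtain ⟨x, hx, y, hy, rfl⟩ := hτ
    simp only [Set.mem_setOf_eq] at hx hy
    simp only [Set.mem_iInter, Set.mem_setOf_eq]
    intro β₁ hβ₁ β₂ hβ₂ hsum
    have hA : (β₁⁻¹ • M₁).PosDef := posdef_smul h₁ (inv_pos.2 hβ₁)
    have hB : (β₂⁻¹ • M₂).PosDef := posdef_smul h₂ (inv_pos.2 hβ₂)
    have hle := sum_qf_le hA hB x y
    have hAinv : (β₁⁻¹ • M₁)⁻¹ = β₁ • M₁⁻¹ := by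
      apply Matrix.inv_eq_right_inv
      rw [Matrix.smul_mul, Matrix.mul_smul,
        mul_nonsing_inv _ ((Matrix.isUnit_iff_isUnit_det _).1 h₁.isUnit), smul_smul,
        inv_mul_cancel₀ hβ₁.ne', one_smul]
    have hBinv : (β₂⁻¹ • M₂)⁻¹ = β₂ • M₂⁻¹ := by
      apply Matrix.inv_eq_right_inv
      rw [Matrix.smul_mul, Matrix.mul_smul,
        mul_nonsing_inv _ ((Matrix.isUnit_iff_isUnit_det _).1 h₂.isUnit), smul_smul,
        inv_mul_cancel₀ hβ₂.ne', one_smul]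
    rw [hAinv, hBinv] at hle
    have e1 : x ⬝ᵥ (β₁ • M₁⁻¹) *ᵥ x = β₁ * (x ⬝ᵥ M₁⁻¹ *ᵥ x) := by
      rw [smul_mulVec, dotProduct_smul, smul_eq_mul]
    have e2 : y ⬝ᵥ (β₂ • M₂⁻¹) *ᵥ y = β₂ * (y ⬝ᵥ M₂⁻¹ *ᵥ y) := by
      rw [smul_mulVec, dotProduct_smul, smul_eq_mul]
    rw [e1, e2] at hle
    nlinarith [mul_le_mul_of_nonneg_left hx hβ₁.le, mul_le_mul_of_nonneg_left hy hβ₂.le]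
  · intro τ hτ
    by_contra hmem
    have hcmp : IsCompact ({τ : Fin n → ℝ | τ ⬝ᵥ M₁⁻¹ *ᵥ τ ≤ 1}
        + {τ : Fin n → ℝ | τ ⬝ᵥ M₂⁻¹ *ᵥ τ ≤ 1}) :=
      (ellipsoid_compact h₁).add (ellipsoid_compact h₂)
    have hconv := (ellipsoid_convex h₁).add (ellipsoid_convex h₂)
    obtain ⟨f, u, hfu, huf⟩ := geometric_hahn_banach_closed_point hconv hcmp.isClosed hmem
    set l : Fin n → ℝ := fun i => f (fun j => if i = j then 1 else 0) with hldef
    have hfl : ∀ v : Fin n → ℝ, f v = l ⬝ᵥ v := by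
      intro v
      conv_lhs => rw [pi_eq_sum_univ v]
      rw [map_sum]
      simp only [_root_.map_smul, smul_eq_mul]
      simp [hldef, dotProduct, mul_comm]
    have h0mem : (0 : Fin n → ℝ) ∈ {τ : Fin n → ℝ | τ ⬝ᵥ M₁⁻¹ *ᵥ τ ≤ 1}
        + {τ : Fin n → ℝ | τ ⬝ᵥ M₂⁻¹ *ᵥ τ ≤ 1} := by
      rw [Set.mem_add]
      exact ⟨0, by simp, 0, by simp, add_zero 0⟩
    have hu0 : 0 < u := by
      have := hfu 0 h0mem
      rwa [map_zero] at this
    have hl0 : l ≠ 0 := by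
      intro h
      rw [hfl τ, h, zero_dotProduct] at huf
      linarith
    have ha : 0 < l ⬝ᵥ M₁ *ᵥ l := qf_pos h₁ hl0
    have hb : 0 < l ⬝ᵥ M₂ *ᵥ l := qf_pos h₂ hl0
    set a := l ⬝ᵥ M₁ *ᵥ l with hadef
    set b := l ⬝ᵥ M₂ *ᵥ l with hbdef
    set sa := √a with hsadef
    set sb := √b with hsbdef
    have hsa : 0 < sa := Real.sqrt_pos.2 ha
    have hsb : 0 < sb := Real.sqrt_pos.2 hb
    have hsa2 : sa * sa = a := Real.mul_self_sqrt ha.le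
    have hsb2 : sb * sb = b := Real.mul_self_sqrt hb.le
    set c := sa + sb with hcdef
    have hc : 0 < c := by positivity
    have hβ₁ : 0 < sa / c := div_pos hsa hc
    have hβ₂ : 0 < sb / c := div_pos hsb hc
    have hsum : sa / c + sb / c = 1 := by
      rw [← add_div, div_self hc.ne']
    simp only [Set.mem_iInter, Set.mem_setOf_eq] at hτ
    have hq := hτ (sa / c) hβ₁ (sb / c) hβ₂ hsum
    set N := (sa / c)⁻¹ • M₁ + (sb / c)⁻¹ • M₂ with hNdef
    have hN : N.PosDef := posdef_add' (posdef_smul h₁ (inv_pos.2 hβ₁))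
      (posdef_smul h₂ (inv_pos.2 hβ₂))
    have hlNl : l ⬝ᵥ N *ᵥ l = c * c := by
      rw [hNdef]
      simp only [add_mulVec, dotProduct_add, smul_mulVec, dotProduct_smul, smul_eq_mul,
        ← hadef, ← hbdef]
      rw [inv_div, inv_div, ← hsa2, ← hsb2]
      field_simp
      ring
    have hcs := cs_inv hN l τ
    rw [hlNl] at hcs
    have hτbound : (l ⬝ᵥ τ) ^ 2 ≤ c * c := by nlinarith
    have hx₀ : sa⁻¹ • (M₁ *ᵥ l) ∈ {τ : Fin n → ℝ | τ ⬝ᵥ M₁⁻¹ *ᵥ τ ≤ 1} := by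
      simp only [Set.mem_setOf_eq, smul_dotProduct, mulVec_smul, dotProduct_smul, smul_eq_mul]
      rw [mulVec_self_qf h₁, ← hadef, ← hsa2]
      rw [show sa⁻¹ * (sa⁻¹ * (sa * sa)) = 1 by field_simp]
    have hy₀ : sb⁻¹ • (M₂ *ᵥ l) ∈ {τ : Fin n → ℝ | τ ⬝ᵥ M₂⁻¹ *ᵥ τ ≤ 1} := by
      simp only [Set.mem_setOf_eq, smul_dotProduct, mulVec_smul, dotProduct_smul, smul_eq_mul]
      rw [mulVec_self_qf h₂, ← hbdef, ← hsb2]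
      rw [show sb⁻¹ * (sb⁻¹ * (sb * sb)) = 1 by field_simp]
    have hmem0 := Set.add_mem_add hx₀ hy₀
    have hlt := hfu _ hmem0
    rw [hfl] at hlt
    have hfs : l ⬝ᵥ (sa⁻¹ • (M₁ *ᵥ l) + sb⁻¹ • (M₂ *ᵥ l)) = c := by
      simp only [dotProduct_add, dotProduct_smul, smul_eq_mul, ← hadef, ← hbdef]
      rw [hcdef, ← hsa2, ← hsb2]
      field_simp
    rw [hfs] at hlt
    rw [hfl] at huf
    nlinarith
end
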